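/- Let G(V) be an ADMG and let A, Y be disjoint subsets of V. There exists a hedge for (Y, A) in G(V) if and only if some district of the induced subgraph G_{Y*} is not an intrinsic set of G(V). -/

import Mathlib

/-- A conditional acyclic directed mixed graph (CADMG) on vertex type `V`:
a directed edge relation `dir` with no directed cycles, a symmetric irreflexive
bidirected edge relation `bi`, and a set `rnd` of random vertices (the remaining
vertices being fixed), such that no directed edge points into a fixed vertex and
no bidirected edge is incident to a fixed vertex.  An ADMG is the special case
`rnd = Set.univ`. -/
structure CADMG (V : Type*) where
  dir : V → V → Prop
  bi : V → V → Prop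
  rnd : Set V
  acyclic : ∀ v, ¬ Relation.TransGen dir v v
  bi_symm : ∀ a b, bi a b → bi b a
  bi_irrefl : ∀ a, ¬ bi a a
  dir_rnd : ∀ a b, dir a b → b ∈ rnd
  bi_rnd : ∀ a b, bi a b → a ∈ rnd ∧ b ∈ rnd

namespace CADMG

variable {V : Type*}

/-- A random vertex `r` is fixable if there is no other vertex `w` with both a
directed path from `r` to `w` and a bidirected path from `r` to `w`. -/
def Fixable (G : CADMG V) (r : V) : Prop :=
  r ∈ G.rnd ∧
    ¬ ∃ w, w ≠ r ∧ Relation.ReflTransGen G.dir r w ∧ Relation.ReflTransGen G.bi r w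

/-- The fixing operator: move `r` from the random to the fixed vertices and delete
all directed edges into `r` and all bidirected edges incident to `r`. -/
def fix (G : CADMG V) (r : V) : CADMG V where
  dir a b := G.dir a b ∧ b ≠ r
  bi a b := G.bi a b ∧ a ≠ r ∧ b ≠ r
  rnd := G.rnd \ {r}
  acyclic v h := G.acyclic v (Relation.TransGen.mono (fun _ _ hab => hab.1) _ _ h)
  bi_symm a b h := ⟨G.bi_symm a b h.1, h.2.2, h.2.1⟩
  bi_irrefl a h := G.bi_irrefl a h.1
  dir_rnd a b h := ⟨G.dir_rnd a b h.1, h.2⟩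
  bi_rnd a b h := ⟨⟨(G.bi_rnd a b h.1).1, h.2.1⟩, (G.bi_rnd a b h.1).2, h.2.2⟩

/-- A sequence of vertices is a valid fixing sequence if it is empty, or its head is
fixable and its tail is valid in the graph obtained by fixing the head. -/
def Valid (G : CADMG V) : List V → Prop
  | [] => True
  | r :: rest => G.Fixable r ∧ (G.fix r).Valid rest

/-- `φ_σ(G)`: the CADMG obtained by applying the fixing operators along the list `σ`. -/
def fixList (G : CADMG V) : List V → CADMG V
  | [] => G
  | r :: rest => (G.fix r).fixList rest

/-- A set `R` of random vertices is reachable if some ordering of the remaining random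
vertices is a valid fixing sequence. -/
def Reachable (G : CADMG V) (R : Set V) : Prop :=
  ∃ σ : List V, G.Valid σ ∧ ∀ v, v ∈ σ ↔ v ∈ G.rnd \ R

/-- `C` is the reachable closure of `S`: the smallest reachable superset of `S`. -/
def IsReachableClosure (G : CADMG V) (S C : Set V) : Prop :=
  G.Reachable C ∧ S ⊆ C ∧ ∀ T, G.Reachable T → S ⊆ T → C ⊆ T

/-- `D` is bidirected-connected (within `D` itself): `D` is nonempty and any two of its
elements are joined by a bidirected path staying inside `D`. -/
def BiConnected (G : CADMG V) (D : Set V) : Prop :=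
  D.Nonempty ∧ ∀ a ∈ D, ∀ b ∈ D,
    Relation.ReflTransGen (fun x y => G.bi x y ∧ x ∈ D ∧ y ∈ D) a b

/-- An intrinsic set: reachable and bidirected-connected. -/
def Intrinsic (G : CADMG V) (R : Set V) : Prop :=
  G.Reachable R ∧ G.BiConnected R

/-- The induced subgraph on a set `W` of vertices (vertices outside `W` become fixed
and lose all their edges). -/
def induce (G : CADMG V) (W : Set V) : CADMG V where
  dir a b := G.dir a b ∧ a ∈ W ∧ b ∈ W
  bi a b := G.bi a b ∧ a ∈ W ∧ b ∈ W
  rnd := G.rnd ∩ W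
  acyclic v h := G.acyclic v (Relation.TransGen.mono (fun _ _ hab => hab.1) _ _ h)
  bi_symm a b h := ⟨G.bi_symm a b h.1, h.2.2, h.2.1⟩
  bi_irrefl a h := G.bi_irrefl a h.1
  dir_rnd a b h := ⟨G.dir_rnd a b h.1, h.2.2⟩
  bi_rnd a b h := ⟨⟨(G.bi_rnd a b h.1).1, h.2.1⟩, (G.bi_rnd a b h.1).2, h.2.2⟩

/-- The districts of a CADMG: the connected components of its random vertices under
the bidirected edge relation. -/
def District (G : CADMG V) (D : Set V) : Prop :=
  ∃ v ∈ G.rnd, D = {w | Relation.ReflTransGen G.bi v w}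

/-- `Y*`: the set of vertices having a directed path (possibly of length zero) to an
element of `Y` that does not intersect `A`. -/
def Ystar (G : CADMG V) (A Y : Set V) : Set V :=
  {v | ∃ y ∈ Y, Relation.ReflTransGen (fun a b => G.dir a b ∧ a ∉ A ∧ b ∉ A) v y}

/-- `F` is an `R`-rooted C-forest: `R ⊆ F`, `F` is bidirected-connected in the induced
subgraph `G_F`, and there is a subgraph of `G_F` with vertex set `F` and a subset `E` of
its directed edges in which every element of `F` has a directed path (possibly of
length zero) to an element of `R`. -/
def CForest (G : CADMG V) (R F : Set V) : Prop :=
  R ⊆ F ∧ G.BiConnected F ∧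
    ∃ E : V → V → Prop,
      (∀ a b, E a b → G.dir a b ∧ a ∈ F ∧ b ∈ F) ∧
      ∀ f ∈ F, ∃ r ∈ R, Relation.ReflTransGen E f r

/-- A hedge for `(Y, A)` in `G`: a pair `(F, F')` of `R`-rooted C-forests, for some common
root set `R`, with `F ⊊ F'`, `F ∩ A = ∅`, `A ∩ (F' \ F) ≠ ∅`, and every element of `R`
has a directed path to an element of `Y` that does not intersect `A`. -/
def Hedge (G : CADMG V) (Y A : Set V) : Prop :=
  ∃ R F F', G.CForest R F ∧ G.CForest R F' ∧ F ⊂ F' ∧ F ∩ A = ∅ ∧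
    (A ∩ (F' \ F)).Nonempty ∧
    ∀ r ∈ R, ∃ y ∈ Y, Relation.ReflTransGen (fun a b => G.dir a b ∧ a ∉ A ∧ b ∉ A) r y

end CADMG

/-!
A C-forest `F'` whose roots lie in a reachable set `D` is contained in `D`: the first vertex of
`F'` fixed along a valid sequence still has, inside the untouched `F'`, both a directed and a
bidirected path to a root, so it is not fixable. Hence for a hedge `(F, F')` the district of
`G_{Y*}` containing `F` is not reachable, since `F'` meets `A` and `Y*` avoids `A`.

Conversely, a random vertex outside `D` that is maximal, in the directed order, among those
that are not both ancestors of `D` and bidirected-connected to `D` is always fixable. Fixing such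
vertices either reaches `D` or stops at a graph whose random vertices form a C-forest rooted in
`D` and strictly containing it. For a non-intrinsic district `D` of `G_{Y*}`, this C-forest and
`D`, both rooted at the sinks of `D`, form a hedge: were the larger one disjoint from `A`, it
would lie in `Y*` and hence in `D`.
-/

namespace Relation.ReflTransGen

variable {α : Type*} {r : α → α → Prop} {S : Set α} {a b : α}

theorem mem_of_mem (hr : ∀ x y, x ∈ S → r x y → y ∈ S) (h : ReflTransGen r a b) (ha : a ∈ S) :
    b ∈ S := by
  induction h with
  | refl => exact ha
  | tail _ hbc ih => exact hr _ _ ih hbc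

theorem restrict (hr : ∀ x y, x ∈ S → r x y → y ∈ S) (h : ReflTransGen r a b) (ha : a ∈ S) :
    ReflTransGen (fun x y => r x y ∧ x ∈ S ∧ y ∈ S) a b := by
  induction h with
  | refl => exact .refl
  | tail hab hbc ih =>
    have hmem := hab.mem_of_mem hr ha
    exact ih.tail ⟨hbc, hmem, hr _ _ hmem hbc⟩

end Relation.ReflTransGen

namespace CADMG

open Relation

variable {V : Type*} {G H : CADMG V} {A Y D F R : Set V} {v : V}

instance (G : CADMG V) : Std.Symm G.bi := ⟨G.bi_symm⟩

theorem BiConnected.mono (h : H.BiConnected D) (hbi : ∀ a b, H.bi a b → G.bi a b) :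
    G.BiConnected D :=
  ⟨h.1, fun a ha b hb =>
    ReflTransGen.mono (fun x y hxy => ⟨hbi x y hxy.1, hxy.2⟩) _ _ (h.2 a ha b hb)⟩

theorem BiConnected.mem_rnd (h : G.BiConnected D) {a b : V} (ha : a ∈ D) (hb : b ∈ D)
    (hab : a ≠ b) : a ∈ G.rnd := by
  obtain rfl | ⟨c, hac, -⟩ := (h.2 a ha b hb).cases_head
  · exact absurd rfl hab
  · exact (G.bi_rnd a c hac.1).1

theorem BiConnected.subset_induce_component {W : Set V} (h : G.BiConnected F) (hFW : F ⊆ W)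
    (hv : v ∈ F) : F ⊆ {w | ReflTransGen (G.induce W).bi v w} := fun f hf =>
  ReflTransGen.mono (fun _ _ hxy => ⟨hxy.1, hFW hxy.2.1, hFW hxy.2.2⟩) _ _ (h.2 v hv f hf)

theorem District.subset_rnd (h : G.District D) : D ⊆ G.rnd := by
  obtain ⟨v, hv, rfl⟩ := h
  exact fun w hw => hw.mem_of_mem (fun x y _ hxy => (G.bi_rnd x y hxy).2) hv

theorem District.biConnected (h : G.District D) : G.BiConnected D := by
  obtain ⟨v, -, rfl⟩ := h
  refine ⟨⟨v, .refl⟩, fun a ha b hb => ?_⟩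
  exact ((symm ha).trans hb).restrict (fun x y hx hxy => hx.tail hxy) ha

theorem fixList_dir (σ : List V) (G : CADMG V) (a b : V) :
    (G.fixList σ).dir a b ↔ G.dir a b ∧ b ∉ σ := by
  induction σ generalizing G with
  | nil => simp [fixList]
  | cons r σ ih =>
    rw [fixList, ih]
    simp only [fix, List.mem_cons]
    tauto

theorem fixList_bi (σ : List V) (G : CADMG V) (a b : V) :
    (G.fixList σ).bi a b ↔ G.bi a b ∧ a ∉ σ ∧ b ∉ σ := by
  induction σ generalizing G with
  | nil => simp [fixList]
  | cons r σ ih =>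
    rw [fixList, ih]
    simp only [fix, List.mem_cons]
    tauto

theorem Valid.of_append {σ τ : List V} (h : G.Valid (σ ++ τ)) : (G.fixList σ).Valid τ := by
  induction σ generalizing G with
  | nil => exact h
  | cons r σ ih => exact ih h.2

theorem reachable_of_rnd_subset (h : G.rnd ⊆ D) : G.Reachable D :=
  ⟨[], trivial, fun v => by simp [Set.sdiff_eq_empty.2 h]⟩

theorem Reachable.of_fix (hv : G.Fixable v) (hvD : v ∉ D) (h : (G.fix v).Reachable D) :
    G.Reachable D := by
  obtain ⟨σ, hσ, hmem⟩ := h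
  refine ⟨v :: σ, ⟨hv, hσ⟩, fun x => ?_⟩
  rw [List.mem_cons, hmem]
  by_cases hx : x = v
  · subst hx
    simp [hv.1, hvD]
  · simp [fix, hx]

theorem BiConnected.fix (h : G.BiConnected D) (hv : v ∉ D) : (G.fix v).BiConnected D :=
  ⟨h.1, fun a ha b hb => ReflTransGen.mono (fun _ _ hxy =>
    ⟨⟨hxy.1, ne_of_mem_of_not_mem hxy.2.1 hv, ne_of_mem_of_not_mem hxy.2.2 hv⟩, hxy.2⟩) _ _
    (h.2 a ha b hb)⟩

theorem CForest.mono (h : H.CForest R F) (hdir : ∀ a b, H.dir a b → G.dir a b)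
    (hbi : ∀ a b, H.bi a b → G.bi a b) : G.CForest R F := by
  obtain ⟨hRF, hbc, E, hE, hroot⟩ := h
  exact ⟨hRF, hbc.mono hbi, E, fun a b hab => ⟨hdir a b (hE a b hab).1, (hE a b hab).2⟩, hroot⟩

theorem CForest.trans {F' : Set V} (h : G.CForest R F) (h' : G.CForest F F') :
    G.CForest R F' := by
  obtain ⟨hRF, -, E, hE, hroot⟩ := h
  obtain ⟨hFF', hbc', E', hE', hroot'⟩ := h'
  refine ⟨hRF.trans hFF', hbc', fun a b => E a b ∨ E' a b, ?_, fun f hf => ?_⟩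
  · rintro a b (hab | hab)
    · exact ⟨(hE a b hab).1, hFF' (hE a b hab).2.1, hFF' (hE a b hab).2.2⟩
    · exact hE' a b hab
  · obtain ⟨g, hg, hfg⟩ := hroot' f hf
    obtain ⟨r, hr, hgr⟩ := hroot g hg
    exact ⟨r, hr, (ReflTransGen.mono (fun _ _ => .inr) _ _ hfg).trans
      (ReflTransGen.mono (fun _ _ => .inl) _ _ hgr)⟩

theorem CForest.fixList {σ : List V} (h : G.CForest R F) (hσ : ∀ x ∈ σ, x ∉ F) :
    (G.fixList σ).CForest R F := by
  obtain ⟨hRF, hbc, E, hE, hroot⟩ := h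
  refine ⟨hRF, ⟨hbc.1, fun a ha b hb => ?_⟩, E, fun a b hab => ?_, hroot⟩
  · refine ReflTransGen.mono (fun x y hxy => ⟨?_, hxy.2⟩) _ _ (hbc.2 a ha b hb)
    exact (fixList_bi σ G x y).2
      ⟨hxy.1, fun hx => hσ x hx hxy.2.1, fun hy => hσ y hy hxy.2.2⟩
  · obtain ⟨hab, ha, hb⟩ := hE a b hab
    exact ⟨(fixList_dir σ G a b).2 ⟨hab, fun hb' => hσ b hb' hb⟩, ha, hb⟩

theorem CForest.mem_of_fixable {w : V} (h : G.CForest R F) (hw : w ∈ F) (hfix : G.Fixable w) :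
    w ∈ R := by
  obtain ⟨hRF, hbc, E, hE, hroot⟩ := h
  obtain ⟨r, hr, hwr⟩ := hroot w hw
  by_contra hwR
  exact hfix.2 ⟨r, fun h => hwR (h ▸ hr), ReflTransGen.mono (fun x y hxy => (hE x y hxy).1) _ _ hwr,
    ReflTransGen.mono (fun x y hxy => hxy.1) _ _ (hbc.2 w hw r (hRF hr))⟩

theorem CForest.subset_of_reachable (hF : G.CForest R F) (hRD : R ⊆ D) (hD : G.Reachable D) :
    F ⊆ D := by
  classical
  obtain ⟨σ, hσ, hmem⟩ := hD
  have ⟨hRF, hbcF, _, _, hroot⟩ := hF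
  intro w hwF
  by_contra hwD
  have hwσ : w ∈ σ := by
    obtain ⟨r, hr, -⟩ := hroot w hwF
    exact (hmem w).2 ⟨hbcF.mem_rnd hwF (hRF hr) fun h => hwD (h ▸ hRD hr), hwD⟩
  have hfind : σ.find? (fun x => decide (x ∈ F)) ≠ none := fun h => by
    simpa [hwF] using List.find?_eq_none.1 h w hwσ
  obtain ⟨u, hfind⟩ := Option.ne_none_iff_exists'.1 hfind
  obtain ⟨huF, σ₁, σ₂, rfl, hσ₁⟩ := List.find?_eq_some_iff_append.1 hfind
  simp only [decide_eq_true_eq, Bool.not_eq_eq_eq_not, Bool.not_true, decide_eq_false_iff_not]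
    at huF hσ₁
  have hfix : (G.fixList σ₁).Fixable u := hσ.of_append.1
  have huD := (hmem u).1 (by simp)
  exact huD.2 (hRD ((hF.fixList hσ₁).mem_of_fixable huF hfix))

theorem disjoint_Ystar (h : Disjoint A Y) : Disjoint A (G.Ystar A Y) := by
  rw [Set.disjoint_left]
  rintro a haA ⟨y, hy, hay⟩
  obtain rfl | ⟨c, hac, -⟩ := hay.cases_head
  · exact Set.disjoint_left.1 h haA hy
  · exact hac.2.1 haA

theorem CForest.subset_Ystar (hF : G.CForest R F) (hFA : Disjoint F A)
    (hR : R ⊆ G.Ystar A Y) : F ⊆ G.Ystar A Y := by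
  obtain ⟨-, -, E, hE, hroot⟩ := hF
  intro f hf
  obtain ⟨r, hr, hfr⟩ := hroot f hf
  obtain ⟨y, hy, hry⟩ := hR hr
  refine ⟨y, hy, (ReflTransGen.mono (fun a b hab => ?_) _ _ hfr).trans hry⟩
  obtain ⟨hab, ha, hb⟩ := hE a b hab
  exact ⟨hab, Set.disjoint_left.1 hFA ha, Set.disjoint_left.1 hFA hb⟩

theorem exists_maximal [Finite V] (G : CADMG V) {U : Set V} (hU : U.Nonempty) :
    ∃ v ∈ U, ∀ u ∈ U, ¬ TransGen G.dir v u := by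
  have : IsTrans V (flip (TransGen G.dir)) := ⟨fun _ _ _ hab hbc => hbc.trans hab⟩
  have : Std.Irrefl (flip (TransGen G.dir)) := ⟨G.acyclic⟩
  exact (Finite.wellFounded_of_trans_of_irrefl (flip (TransGen G.dir))).has_min U hU

def sinks (G : CADMG V) (D : Set V) : Set V :=
  {d ∈ D | ∀ d' ∈ D, ¬ G.dir d d'}

theorem cForest_sinks [Finite V] (h : G.BiConnected D) : G.CForest (G.sinks D) D := by
  refine ⟨fun d hd => hd.1, h, fun a b => G.dir a b ∧ a ∈ D ∧ b ∈ D, fun _ _ hab => hab,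
    fun f hf => ?_⟩
  obtain ⟨r, hfr, hmax⟩ := G.exists_maximal
    (U := {u | ReflTransGen (fun a b => G.dir a b ∧ a ∈ D ∧ b ∈ D) f u}) ⟨f, .refl⟩
  have hr : r ∈ D := hfr.mem_of_mem (fun _ _ _ hxy => hxy.2.2) hf
  exact ⟨r, ⟨hr, fun d hd hrd => hmax d (hfr.tail ⟨hrd, hr, hd⟩) (.single hrd)⟩, hfr⟩

def ancestralDistrict (G : CADMG V) (D : Set V) : Set V :=
  {u ∈ G.rnd | (∃ d ∈ D, ReflTransGen G.dir u d) ∧ ∃ d ∈ D, ReflTransGen G.bi d u}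

theorem subset_ancestralDistrict (hD : D ⊆ G.rnd) : D ⊆ G.ancestralDistrict D :=
  fun d hd => ⟨hD hd, ⟨d, hd, .refl⟩, d, hd, .refl⟩

theorem fixable_of_maximal_not_mem_ancestralDistrict (hv : v ∈ G.rnd \ G.ancestralDistrict D)
    (hmax : ∀ u ∈ G.rnd \ G.ancestralDistrict D, ¬ TransGen G.dir v u) : G.Fixable v := by
  refine ⟨hv.1, fun ⟨w, hwv, hdir, hbi⟩ => ?_⟩
  have hvw : TransGen G.dir v w := (reflTransGen_iff_eq_or_transGen.1 hdir).resolve_left hwv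
  have hw : w ∈ G.rnd := hdir.mem_of_mem (fun _ _ _ hxy => G.dir_rnd _ _ hxy) hv.1
  obtain ⟨-, ⟨d, hd, hwd⟩, d', hd', hd'w⟩ : w ∈ G.ancestralDistrict D :=
    not_not.1 fun h => hmax w ⟨hw, h⟩ hvw
  exact hv.2 ⟨hv.1, ⟨d, hd, hdir.trans hwd⟩, d', hd', hd'w.trans (symm hbi)⟩

theorem cForest_rnd (hD : D ⊆ G.rnd) (hbc : G.BiConnected D)
    (h : G.rnd ⊆ G.ancestralDistrict D) : G.CForest D G.rnd := by
  refine ⟨hD, ⟨hbc.1.mono hD, fun a ha b hb => ?_⟩, fun a b => G.dir a b ∧ a ∈ G.rnd ∧ b ∈ G.rnd,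
    fun _ _ hab => hab, fun f hf => ?_⟩
  · obtain ⟨-, -, d, hd, hda⟩ := h ha
    obtain ⟨-, -, d', hd', hd'b⟩ := h hb
    have hdd' : ReflTransGen G.bi d d' :=
      ReflTransGen.mono (fun _ _ hxy => hxy.1) _ _ (hbc.2 d hd d' hd')
    exact ReflTransGen.mono (fun x y hxy => ⟨hxy, G.bi_rnd x y hxy⟩) _ _
      (((symm hda).trans hdd').trans hd'b)
  · obtain ⟨-, ⟨d, hd, hfd⟩, -⟩ := h hf
    exact ⟨d, hd, hfd.restrict (fun _ _ _ hxy => G.dir_rnd _ _ hxy) hf⟩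

theorem exists_cForest_ssuperset_or_reachable [Finite V] (G : CADMG V) (hD : D ⊆ G.rnd)
    (hbc : G.BiConnected D) : (∃ F, D ⊂ F ∧ G.CForest D F) ∨ G.Reachable D := by
  by_cases hrD : G.rnd ⊆ D
  · exact .inr (reachable_of_rnd_subset hrD)
  by_cases hanc : G.rnd ⊆ G.ancestralDistrict D
  · exact .inl ⟨G.rnd, ssubset_of_subset_not_subset hD hrD, cForest_rnd hD hbc hanc⟩
  obtain ⟨v, hv, hmax⟩ := G.exists_maximal (Set.sdiff_nonempty.2 hanc)
  have hvD : v ∉ D := fun h => hv.2 (subset_ancestralDistrict hD h)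
  have hfix := fixable_of_maximal_not_mem_ancestralDistrict hv hmax
  have hD' : D ⊆ (G.fix v).rnd := fun d hd => ⟨hD hd, ne_of_mem_of_not_mem hd hvD⟩
  rcases (G.fix v).exists_cForest_ssuperset_or_reachable hD' (hbc.fix hvD) with
    ⟨F, hDF, hF⟩ | hreach
  · exact .inl ⟨F, hDF, hF.mono (fun _ _ h => h.1) fun _ _ h => h.1⟩
  · exact .inr (hreach.of_fix hfix hvD)
termination_by G.rnd.ncard
decreasing_by exact Set.ncard_sdiff_singleton_lt_of_mem hv.1

theorem Hedge.exists_district_not_intrinsic (hAY : Disjoint A Y) (h : G.Hedge Y A) :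
    ∃ D, (G.induce (G.Ystar A Y)).District D ∧ ¬ G.Intrinsic D := by
  obtain ⟨R, F, F', hF, hF', hFF', hFA, ⟨a, haA, haF', haF⟩, hRY⟩ := h
  have hFW : F ⊆ G.Ystar A Y := hF.subset_Ystar (Set.disjoint_iff_inter_eq_empty.2 hFA) hRY
  obtain ⟨f, hf⟩ := hF.2.1.1
  have hf_rnd : f ∈ G.rnd := hF'.2.1.mem_rnd (hFF'.subset hf) haF' fun h => haF (h ▸ hf)
  have hD : (G.induce (G.Ystar A Y)).District {w | ReflTransGen (G.induce _).bi f w} :=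
    ⟨f, ⟨hf_rnd, hFW hf⟩, rfl⟩
  refine ⟨_, hD, fun hint => ?_⟩
  have hF'D := hF'.subset_of_reachable (hF.1.trans (hF.2.1.subset_induce_component hFW hf)) hint.1
  exact Set.disjoint_left.1 (G.disjoint_Ystar hAY) haA (hD.subset_rnd (hF'D haF')).2

theorem hedge_of_district_not_intrinsic [Finite V] (hAY : Disjoint A Y)
    (hD : (G.induce (G.Ystar A Y)).District D) (hnD : ¬ G.Intrinsic D) : G.Hedge Y A := by
  have hDrnd : D ⊆ G.rnd ∩ G.Ystar A Y := hD.subset_rnd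
  have hbc : G.BiConnected D := hD.biConnected.mono fun _ _ h => h.1
  have hDA : Disjoint D A := (G.disjoint_Ystar hAY).symm.mono_left fun d hd => (hDrnd hd).2
  obtain ⟨F, hDF, hF⟩ := (G.exists_cForest_ssuperset_or_reachable (fun d hd => (hDrnd hd).1)
    hbc).resolve_right fun h => hnD ⟨h, hbc⟩
  refine ⟨G.sinks D, D, F, cForest_sinks hbc, (cForest_sinks hbc).trans hF, hDF,
    Set.disjoint_iff_inter_eq_empty.1 hDA, ?_, fun r hr => (hDrnd hr.1).2⟩
  by_contra hFA
  have hFA' : Disjoint F A := by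
    refine Set.disjoint_left.2 fun x hxF hxA => ?_
    by_cases hxD : x ∈ D
    · exact Set.disjoint_left.1 hDA hxD hxA
    · exact hFA ⟨x, hxA, hxF, hxD⟩
  have hFW := hF.subset_Ystar hFA' fun d hd => (hDrnd hd).2
  obtain ⟨v, -, rfl⟩ := hD
  exact hDF.not_subset (hF.2.1.subset_induce_component hFW (hDF.subset .refl))

end CADMG

theorem hedge_exists_iff_some_district_not_intrinsic_general
    {V : Type*} [Fintype V] (G : CADMG V)
    (A Y : Set V) (hdisj : Disjoint A Y) :
    G.Hedge Y A ↔
      ∃ D, (G.induce (G.Ystar A Y)).District D ∧ ¬ G.Intrinsic D :=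
  ⟨CADMG.Hedge.exists_district_not_intrinsic hdisj,
    fun ⟨_, hD, hnD⟩ => CADMG.hedge_of_district_not_intrinsic hdisj hD hnD⟩

/-- There exists a hedge for `(Y, A)` in the ADMG `G` iff some district of
the induced subgraph `G_{Y*}` is not an intrinsic set of `G`. -/
theorem hedge_exists_iff_some_district_not_intrinsic
    {V : Type*} [Fintype V] (G : CADMG V) (hG : G.rnd = Set.univ)
    (A Y : Set V) (hdisj : Disjoint A Y) :
    G.Hedge Y A ↔
      ∃ D, (G.induce (G.Ystar A Y)).District D ∧ ¬ G.Intrinsic D :=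
  hedge_exists_iff_some_district_not_intrinsic_general G A Y hdisj
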